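/- Let ω ∈ (0,π/2) and l = arccos(1 − cos ω) (so cos l + cos ω = 1 and (l,ω) ∈ (0,π/2)²). Define the vectors v_Π± = (cos ω − 1/2, ∓1/2, −sin(ω)/√2, √((2−cos ω)·cos ω)/√2). Then v_Π₊ and v_Π₋ are unit vectors in ℝ⁴; v_Π₊ is orthogonal to both x_{l,ω} and z₊, and v_Π₋ is orthogonal to both x_{l,ω} and z₋; moreover ⟨v_Π₊, v_Π₋⟩ = 1/2 and |⟨v_Π±, i⟩| = 1/2. In particular, the totally geodesic two-spheres of S³ orthogonal to v_Π₊ and v_Π₋ meet each other at angle π/3 and each meets the sphere S³ ∩ {x₂ = 0} at angle π/3. -/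

import Mathlib

/-! With `c = cos ω`, the choice `l = arccos (1 - c)` gives `cos l = 1 - c` and
`sin l = √((2 - c) c)`, so after expanding `x_{l,ω}` and `z_±` every inner product is a
polynomial in `c`, `sin ω` and `√((2 - c) c)` that vanishes (or equals `1`, `1/2`) modulo
`sin² ω + c² = 1` and `√((2 - c) c)² = (2 - c) c`. The angles then follow from
`arccos (1/2) = π/3`. -/

open Real

noncomputable def dot4 (p q : Fin 4 → ℝ) : ℝ := ∑ m, p m * q m

noncomputable def vE : Fin 4 → ℝ := ![1, 0, 0, 0]
noncomputable def vI : Fin 4 → ℝ := ![0, 1, 0, 0]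
noncomputable def vJ : Fin 4 → ℝ := ![0, 0, 1, 0]
noncomputable def vK : Fin 4 → ℝ := ![0, 0, 0, 1]
noncomputable def vP : Fin 4 → ℝ := ![1 / Real.sqrt 2, 1 / Real.sqrt 2, 0, 0]
noncomputable def vM : Fin 4 → ℝ := ![1 / Real.sqrt 2, -(1 / Real.sqrt 2), 0, 0]

noncomputable def zP (l : ℝ) : Fin 4 → ℝ := Real.cos l • vK + Real.sin l • vP
noncomputable def zM (l : ℝ) : Fin 4 → ℝ := Real.cos l • vK + Real.sin l • vM
noncomputable def uP (ω : ℝ) : Fin 4 → ℝ := Real.sin ω • vJ - Real.cos ω • vM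
noncomputable def uM (ω : ℝ) : Fin 4 → ℝ := Real.sin ω • vJ - Real.cos ω • vP

/-- The geodesic edge `β₊` of the pentagon, `β₊(r) = cos r · z₊ + sin r · u₊`. -/
noncomputable def betaP (l ω r : ℝ) : Fin 4 → ℝ := Real.cos r • zP l + Real.sin r • uP ω

/-- The geodesic edge `β₋` of the pentagon, `β₋(r) = cos r · z₋ + sin r · u₋`. -/
noncomputable def betaM (l ω r : ℝ) : Fin 4 → ℝ := Real.cos r • zM l + Real.sin r • uM ω

/-- `E(l,ω) = √((cos²l + sin²ω)(sin²l + cos²ω))`. -/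
noncomputable def Efun (l ω : ℝ) : ℝ :=
  Real.sqrt ((Real.cos l ^ 2 + Real.sin ω ^ 2) * (Real.sin l ^ 2 + Real.cos ω ^ 2))

/-- The midpoint `x_{l,ω}` of the edge `α`. -/
noncomputable def xlw (l ω : ℝ) : Fin 4 → ℝ :=
  (Efun l ω)⁻¹ •
    ![(-(Real.cos (2*l) + Real.cos (2*ω))) / 2, 0,
      Real.sin (2*ω) / Real.sqrt 2, Real.sin (2*l) / Real.sqrt 2]

/-- The normal vector `v_Π₊` of the extra symmetry sphere `Π₊,ω`. -/
noncomputable def vPiP (ω : ℝ) : Fin 4 → ℝ :=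
  ![Real.cos ω - 1/2, -(1/2), -(Real.sin ω / Real.sqrt 2),
    Real.sqrt ((2 - Real.cos ω) * Real.cos ω) / Real.sqrt 2]

/-- The normal vector `v_Π₋` of the extra symmetry sphere `Π₋,ω`. -/
noncomputable def vPiM (ω : ℝ) : Fin 4 → ℝ :=
  ![Real.cos ω - 1/2, 1/2, -(Real.sin ω / Real.sqrt 2),
    Real.sqrt ((2 - Real.cos ω) * Real.cos ω) / Real.sqrt 2]

lemma dot4_cons (a₀ a₁ a₂ a₃ b₀ b₁ b₂ b₃ : ℝ) :
    dot4 ![a₀, a₁, a₂, a₃] ![b₀, b₁, b₂, b₃] = a₀ * b₀ + a₁ * b₁ + a₂ * b₂ + a₃ * b₃ := by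
  simp [dot4, Fin.sum_univ_four]

lemma dot4_smul_right (c : ℝ) (p q : Fin 4 → ℝ) : dot4 p (c • q) = c * dot4 p q := by
  simp only [dot4, Pi.smul_apply, smul_eq_mul, Finset.mul_sum]
  exact Finset.sum_congr rfl fun _ _ => by ring

lemma zP_eq (l : ℝ) : zP l = ![sin l / √2, sin l / √2, 0, cos l] := by
  ext m; fin_cases m <;> simp [zP, vK, vP, div_eq_mul_inv]

lemma zM_eq (l : ℝ) : zM l = ![sin l / √2, -(sin l / √2), 0, cos l] := by
  ext m; fin_cases m <;> simp [zM, vK, vM, div_eq_mul_inv]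

lemma div_sqrt_two_mul_div_sqrt_two (x y : ℝ) : x / √2 * (y / √2) = x * y / 2 := by
  rw [div_mul_div_comm, mul_self_sqrt zero_le_two]

lemma cos_arccos_one_sub {c : ℝ} (h₀ : 0 ≤ c) (h₂ : c ≤ 2) : cos (arccos (1 - c)) = 1 - c :=
  cos_arccos (by linarith) (by linarith)

lemma sin_arccos_one_sub (c : ℝ) : sin (arccos (1 - c)) = √((2 - c) * c) := by
  rw [sin_arccos]; ring_nf

lemma arccos_one_half : arccos (1 / 2) = π / 3 := by
  rw [← cos_pi_div_three, arccos_cos (by positivity) (by linarith [pi_pos])]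

lemma two_sub_cos_mul_cos_nonneg {ω : ℝ} (hcos : 0 ≤ cos ω) : 0 ≤ (2 - cos ω) * cos ω :=
  mul_nonneg (by linarith [cos_le_one ω]) hcos

section

variable {ω : ℝ}

lemma dot4_vPiP_self (hcos : 0 ≤ cos ω) : dot4 (vPiP ω) (vPiP ω) = 1 := by
  simp only [vPiP, dot4_cons, neg_mul, mul_neg, neg_neg, div_sqrt_two_mul_div_sqrt_two,
    mul_self_sqrt (two_sub_cos_mul_cos_nonneg hcos)]
  linear_combination (1 / 2) * sin_sq_add_cos_sq ω

lemma dot4_vPiM_self (hcos : 0 ≤ cos ω) : dot4 (vPiM ω) (vPiM ω) = 1 := by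
  simp only [vPiM, dot4_cons, neg_mul, mul_neg, neg_neg, div_sqrt_two_mul_div_sqrt_two,
    mul_self_sqrt (two_sub_cos_mul_cos_nonneg hcos)]
  linear_combination (1 / 2) * sin_sq_add_cos_sq ω

lemma dot4_vPiP_vPiM (hcos : 0 ≤ cos ω) : dot4 (vPiP ω) (vPiM ω) = 1 / 2 := by
  simp only [vPiP, vPiM, dot4_cons, neg_mul, mul_neg, neg_neg, div_sqrt_two_mul_div_sqrt_two,
    mul_self_sqrt (two_sub_cos_mul_cos_nonneg hcos)]
  linear_combination (1 / 2) * sin_sq_add_cos_sq ω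

lemma dot4_vPiP_vI : dot4 (vPiP ω) vI = -(1 / 2) := by
  simp only [vPiP, vI, dot4_cons]; ring

lemma dot4_vPiM_vI : dot4 (vPiM ω) vI = 1 / 2 := by
  simp only [vPiM, vI, dot4_cons]; ring

lemma dot4_vPiP_zP (hcos : 0 ≤ cos ω) : dot4 (vPiP ω) (zP (arccos (1 - cos ω))) = 0 := by
  rw [zP_eq, cos_arccos_one_sub hcos (by linarith [cos_le_one ω]), sin_arccos_one_sub, vPiP]
  simp only [dot4_cons]
  ring

lemma dot4_vPiM_zM (hcos : 0 ≤ cos ω) : dot4 (vPiM ω) (zM (arccos (1 - cos ω))) = 0 := by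
  rw [zM_eq, cos_arccos_one_sub hcos (by linarith [cos_le_one ω]), sin_arccos_one_sub, vPiM]
  simp only [dot4_cons]
  ring

lemma dot4_vPiP_xlw (hcos : 0 ≤ cos ω) :
    dot4 (vPiP ω) (xlw (arccos (1 - cos ω)) ω) = 0 := by
  rw [xlw, dot4_smul_right, cos_two_mul, cos_two_mul, sin_two_mul, sin_two_mul,
    cos_arccos_one_sub hcos (by linarith [cos_le_one ω]), sin_arccos_one_sub, vPiP, dot4_cons]
  refine mul_eq_zero_of_right _ ?_
  simp only [neg_mul, div_sqrt_two_mul_div_sqrt_two]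
  linear_combination
    (-cos ω) * sin_sq_add_cos_sq ω + (1 - cos ω) * sq_sqrt (two_sub_cos_mul_cos_nonneg hcos)

lemma dot4_vPiM_xlw (hcos : 0 ≤ cos ω) :
    dot4 (vPiM ω) (xlw (arccos (1 - cos ω)) ω) = 0 := by
  rw [xlw, dot4_smul_right, cos_two_mul, cos_two_mul, sin_two_mul, sin_two_mul,
    cos_arccos_one_sub hcos (by linarith [cos_le_one ω]), sin_arccos_one_sub, vPiM, dot4_cons]
  refine mul_eq_zero_of_right _ ?_
  simp only [neg_mul, div_sqrt_two_mul_div_sqrt_two]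
  linear_combination
    (-cos ω) * sin_sq_add_cos_sq ω + (1 - cos ω) * sq_sqrt (two_sub_cos_mul_cos_nonneg hcos)

end

/-- for `ω ∈ (0,π/2)` and `l = arccos(1 − cos ω)`, the vectors `v_Π±` are
unit, `v_Π₊ ⟂ x_{l,ω}, z₊`, `v_Π₋ ⟂ x_{l,ω}, z₋`, `⟨v_Π₊,v_Π₋⟩ = 1/2`
and `|⟨v_Π±, i⟩| = 1/2`; in particular the corresponding totally geodesic two-spheres
meet each other, and each meets `S³ ∩ {x₂ = 0}`, at angle `π/3`. -/
theorem stmt10 (ω : ℝ) (hω : ω ∈ Set.Ioo 0 (π/2)) :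
    dot4 (vPiP ω) (vPiP ω) = 1 ∧
    dot4 (vPiM ω) (vPiM ω) = 1 ∧
    dot4 (vPiP ω) (xlw (Real.arccos (1 - Real.cos ω)) ω) = 0 ∧
    dot4 (vPiP ω) (zP (Real.arccos (1 - Real.cos ω))) = 0 ∧
    dot4 (vPiM ω) (xlw (Real.arccos (1 - Real.cos ω)) ω) = 0 ∧
    dot4 (vPiM ω) (zM (Real.arccos (1 - Real.cos ω))) = 0 ∧
    dot4 (vPiP ω) (vPiM ω) = 1/2 ∧
    |dot4 (vPiP ω) vI| = 1/2 ∧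
    |dot4 (vPiM ω) vI| = 1/2 ∧
    Real.arccos (dot4 (vPiP ω) (vPiM ω)) = π/3 ∧
    Real.arccos |dot4 (vPiP ω) vI| = π/3 ∧
    Real.arccos |dot4 (vPiM ω) vI| = π/3 := by
  have hcos : 0 ≤ cos ω := cos_nonneg_of_mem_Icc ⟨by linarith [hω.1, pi_pos], hω.2.le⟩
  have hP : |dot4 (vPiP ω) vI| = 1 / 2 := by rw [dot4_vPiP_vI, abs_neg, abs_of_pos one_half_pos]
  have hM : |dot4 (vPiM ω) vI| = 1 / 2 := by rw [dot4_vPiM_vI, abs_of_pos one_half_pos]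
  have hPM := dot4_vPiP_vPiM hcos
  exact ⟨dot4_vPiP_self hcos, dot4_vPiM_self hcos, dot4_vPiP_xlw hcos, dot4_vPiP_zP hcos,
    dot4_vPiM_xlw hcos, dot4_vPiM_zM hcos, hPM, hP, hM, hPM ▸ arccos_one_half,
    hP ▸ arccos_one_half, hM ▸ arccos_one_half⟩
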